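/- arXiv:2112.11645 — 5 statements merged into one kernel-verified Lean document; each statement's English description precedes it below -/
import Mathlib

section
/- Let D ⊆ ℝ³ be a bounded Lebesgue-measurable set of positive measure, ω a unit vector, and 1 ≤ p < ∞. If D is p-regular with respect to ω, then lim_{τ→∞} ‖v₀‖_{L¹(D)} / ‖v₀‖_{L²(D)} = 0, where v₀(x) = e^{τ x·ω}. -/
open MeasureTheory Filter
open scoped ENNReal RealInnerProductSpace
open Real Set Topology

/-!
Split `∫_D e^{τ x·ω}` at the level `h - η`, where `h = h_D(ω)`. The part below is at most
`e^{τ(h-η)} |D|`, and by Cauchy–Schwarz the part above is at most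
`|D ∩ {x·ω > h - η}|^{1/2} ‖v₀‖_{L²}`. The hyperplane `{x·ω = h}` is Lebesgue-null, so this top
layer has measure tending to `0` with `η`. On the other hand, the slices just below `h` have
positive area, so by Fubini every layer `D ∩ {x·ω > h - η/2}` has positive volume, whence
`‖v₀‖_{L²} ≳ e^{τ(h - η/2)}`, which beats `e^{τ(h-η)}` as `τ → ∞`.
-/

section Analytic

variable {α : Type*} [MeasurableSpace α] {μ : Measure α} [IsFiniteMeasure μ]

theorem integral_le_sqrt_measureReal_univ_mul_sqrt_integral_sq {g : α → ℝ} (hg₀ : 0 ≤ᵐ[μ] g)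
    (hg : MemLp g 2 μ) : ∫ x, g x ∂μ ≤ √(μ.real univ) * √(∫ x, g x ^ 2 ∂μ) := by
  have := integral_mul_le_Lp_mul_Lq_of_nonneg Real.HolderConjugate.two_two hg₀
    (ae_of_all _ fun _ => zero_le_one) (by simpa using hg) (memLp_const (1 : ℝ))
  simpa [sqrt_eq_rpow, mul_comm] using this

variable {f : α → ℝ} {h τ : ℝ}

theorem memLp_exp_mul_of_ae_le (hf : Measurable f) (hfh : ∀ᵐ x ∂μ, f x ≤ h) (hτ : 0 ≤ τ)
    (p : ℝ≥0∞) : MemLp (fun x => exp (τ * f x)) p μ :=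
  MemLp.of_bound (by fun_prop) (exp (τ * h)) <| by
    filter_upwards [hfh] with x hx
    rw [norm_of_nonneg (exp_pos _).le]
    exact exp_le_exp.2 (mul_le_mul_of_nonneg_left hx hτ)

theorem integrable_exp_mul_of_ae_le (hf : Measurable f) (hfh : ∀ᵐ x ∂μ, f x ≤ h) (hτ : 0 ≤ τ) :
    Integrable (fun x => exp (τ * f x)) μ :=
  memLp_one_iff_integrable.1 (memLp_exp_mul_of_ae_le hf hfh hτ 1)

theorem integral_exp_mul_le (hf : Measurable f) (hfh : ∀ᵐ x ∂μ, f x ≤ h) (hτ : 0 ≤ τ) (η : ℝ) :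
    ∫ x, exp (τ * f x) ∂μ ≤ exp (τ * (h - η)) * μ.real univ +
      √(μ.real {x | h - η < f x}) * √(∫ x, exp (2 * τ * f x) ∂μ) := by
  set A := {x | h - η < f x}
  have hA : MeasurableSet A := measurableSet_lt measurable_const hf
  have hint := integrable_exp_mul_of_ae_le hf hfh hτ
  rw [← integral_add_compl hA hint, add_comm]
  gcongr
  · calc ∫ x in Aᶜ, exp (τ * f x) ∂μ ≤ ∫ x in Aᶜ, exp (τ * (h - η)) ∂μ :=
          setIntegral_mono_on hint.integrableOn (integrableOn_const) hA.compl fun x hx =>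
            exp_le_exp.2 (mul_le_mul_of_nonneg_left (not_lt.1 hx) hτ)
      _ ≤ exp (τ * (h - η)) * μ.real univ := by
          rw [setIntegral_const, smul_eq_mul, mul_comm]
          gcongr
          exacts [measure_ne_top _ _, subset_univ _]
  · have hsq : ∀ x, exp (τ * f x) ^ 2 = exp (2 * τ * f x) := fun x => by
      rw [← exp_nat_mul]; ring_nf
    calc ∫ x in A, exp (τ * f x) ∂μ
        ≤ √(μ.real A) * √(∫ x in A, exp (τ * f x) ^ 2 ∂μ) := by
          simpa using integral_le_sqrt_measureReal_univ_mul_sqrt_integral_sq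
            (ae_of_all _ fun _ => (exp_pos _).le)
            (memLp_exp_mul_of_ae_le hf (ae_restrict_of_ae hfh) hτ 2)
      _ ≤ √(μ.real A) * √(∫ x, exp (2 * τ * f x) ∂μ) := by
          simp_rw [hsq]
          gcongr
          exacts [ae_of_all _ fun _ => (exp_pos _).le,
            integrable_exp_mul_of_ae_le (τ := 2 * τ) hf hfh (by positivity),
            Measure.restrict_le_self]

theorem measureReal_mul_exp_le_integral_exp (hint : Integrable (fun x => exp (τ * f x)) μ)
    (hτ : 0 ≤ τ) (c : ℝ) : μ.real {x | c < f x} * exp (τ * c) ≤ ∫ x, exp (τ * f x) ∂μ :=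
  calc μ.real {x | c < f x} * exp (τ * c)
      ≤ exp (τ * c) * μ.real {x | exp (τ * c) ≤ exp (τ * f x)} := by
        rw [mul_comm]
        gcongr
        · exact measure_ne_top _ _
        · exact fun hx => exp_le_exp.2 (mul_le_mul_of_nonneg_left hx.le hτ)
    _ ≤ ∫ x, exp (τ * f x) ∂μ :=
        mul_meas_ge_le_integral_of_nonneg (ae_of_all _ fun _ => (exp_pos _).le) hint _

theorem tendsto_measureReal_setOf_sub_lt (hf : Measurable f) (hlt : ∀ᵐ x ∂μ, f x < h) :
    Tendsto (fun η => μ.real {x | h - η < f x}) (𝓝[>] 0) (𝓝 0) := by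
  have hlim := tendsto_measure_biInter_gt (μ := μ) (s := fun η => {x | h - η < f x}) (a := 0)
    (fun _ _ => (measurableSet_lt measurable_const hf).nullMeasurableSet)
    (fun _ _ _ hij x (hx : h - _ < f x) => show h - _ < f x by linarith)
    ⟨1, one_pos, measure_ne_top _ _⟩
  have hInter : ⋂ η > 0, {x | h - η < f x} = {x | h ≤ f x} := by
    ext x
    simp only [mem_iInter, mem_ofPred_eq]
    refine ⟨fun H => not_lt.1 fun hx => ?_, fun hx η hη => by linarith⟩
    have := H (h - f x) (by linarith)
    linarith
  have hnull : μ {x | h ≤ f x} = 0 := by simpa [ae_iff] using hlt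
  rw [hInter, hnull] at hlim
  exact (ENNReal.tendsto_toReal ENNReal.zero_ne_top).comp hlim

theorem integral_exp_div_sqrt_le (hf : Measurable f) (hfh : ∀ᵐ x ∂μ, f x ≤ h) (hτ : 0 ≤ τ)
    {η : ℝ} (hm : 0 < μ.real {x | h - η / 2 < f x}) :
    (∫ x, exp (τ * f x) ∂μ) / √(∫ x, exp (2 * τ * f x) ∂μ) ≤
      μ.real univ / √(μ.real {x | h - η / 2 < f x}) * exp (-(η / 2) * τ) +
        √(μ.real {x | h - η < f x}) := by
  set m := μ.real {x | h - η / 2 < f x}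
  set J := ∫ x, exp (2 * τ * f x) ∂μ
  have hJ : √m * exp (τ * (h - η / 2)) ≤ √J := by
    rw [← sqrt_sq (exp_pos _).le, ← sqrt_mul hm.le]
    refine sqrt_le_sqrt ?_
    calc m * exp (τ * (h - η / 2)) ^ 2 = m * exp (2 * τ * (h - η / 2)) := by
          rw [← exp_nat_mul]; ring_nf
      _ ≤ J := measureReal_mul_exp_le_integral_exp
          (integrable_exp_mul_of_ae_le hf hfh (by positivity)) (by positivity) _
  have hJpos : 0 < √m * exp (τ * (h - η / 2)) := by positivity
  calc (∫ x, exp (τ * f x) ∂μ) / √J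
      ≤ (exp (τ * (h - η)) * μ.real univ + √(μ.real {x | h - η < f x}) * √J) / √J := by
        gcongr
        exact integral_exp_mul_le hf hfh hτ η
    _ = exp (τ * (h - η)) * μ.real univ / √J + √(μ.real {x | h - η < f x}) := by
        rw [add_div, mul_div_cancel_right₀ _ (hJpos.trans_le hJ).ne']
    _ ≤ exp (τ * (h - η)) * μ.real univ / (√m * exp (τ * (h - η / 2))) +
          √(μ.real {x | h - η < f x}) := by
        gcongr
    _ = μ.real univ / √m * exp (-(η / 2) * τ) + √(μ.real {x | h - η < f x}) := by
        rw [show τ * (h - η) = τ * (h - η / 2) + -(η / 2) * τ by ring, exp_add]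
        field_simp

theorem tendsto_integral_exp_div_sqrt_integral_exp (hf : Measurable f) (hlt : ∀ᵐ x ∂μ, f x < h)
    (hpos : ∀ b > 0, 0 < μ {x | h - b < f x}) :
    Tendsto (fun τ => (∫ x, exp (τ * f x) ∂μ) / √(∫ x, exp (2 * τ * f x) ∂μ)) atTop (𝓝 0) := by
  have hfh : ∀ᵐ x ∂μ, f x ≤ h := hlt.mono fun _ => le_of_lt
  refine tendsto_order.2 ⟨fun a ha => Eventually.of_forall fun τ => ha.trans_le ?_, fun ε hε => ?_⟩
  · exact div_nonneg (integral_nonneg fun _ => (exp_pos _).le) (sqrt_nonneg _)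
  obtain ⟨η, hηε, hη⟩ : ∃ η, √(μ.real {x | h - η < f x}) < ε / 2 ∧ 0 < η := by
    have := (tendsto_measureReal_setOf_sub_lt hf hlt).sqrt
    rw [sqrt_zero] at this
    exact ((this.eventually (gt_mem_nhds (half_pos hε))).and self_mem_nhdsWithin).exists
  have hm : 0 < μ.real {x | h - η / 2 < f x} :=
    ENNReal.toReal_pos (hpos _ (half_pos hη)).ne' (measure_ne_top _ _)
  have hdecay : Tendsto (fun τ => μ.real univ / √(μ.real {x | h - η / 2 < f x}) *
      exp (-(η / 2) * τ)) atTop (𝓝 0) := by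
    simpa using (tendsto_exp_atBot.comp
      (tendsto_id.const_mul_atTop_of_neg (by linarith : -(η / 2) < 0))).const_mul
      (μ.real univ / √(μ.real {x | h - η / 2 < f x}))
  filter_upwards [hdecay.eventually (gt_mem_nhds (half_pos hε)), eventually_ge_atTop 0]
    with τ hτε hτ
  calc _ ≤ _ := integral_exp_div_sqrt_le hf hfh hτ hm
    _ < ε / 2 + ε / 2 := add_lt_add hτε hηε
    _ = ε := add_halves ε

end Analytic

section Slicing

variable {E : Type*} [NormedAddCommGroup E] [InnerProductSpace ℝ E] [FiniteDimensional ℝ E]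
  [MeasurableSpace E] [BorelSpace E] {n : ℕ}

theorem exists_measurePreserving_inner_fst (hn : Module.finrank ℝ E = n + 1) {ω : E}
    (hω : ‖ω‖ = 1) :
    ∃ Φ : E ≃ᵐ ℝ × (Fin n → ℝ), MeasurePreserving Φ ∧ (∀ x, (Φ x).1 = ⟪x, ω⟫) ∧
      ∃ K, ∀ t, LipschitzWith K fun y => Φ.symm (t, y) := by
  have horth : Orthonormal ℝ (Set.domRestrict {0} fun _ : Fin (n + 1) => ω) :=
    ⟨fun _ => hω, fun i j hij => absurd (Subtype.ext (i.2.trans j.2.symm)) hij⟩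
  obtain ⟨b, hb⟩ := horth.exists_orthonormalBasis_extension_of_card_eq (by simpa using hn)
  let Φ := (b.repr.toHomeomorph.toMeasurableEquiv.trans
    (MeasurableEquiv.toLp 2 (Fin (n + 1) → ℝ)).symm).trans
    (MeasurableEquiv.piFinSuccAbove (fun _ => ℝ) 0)
  refine ⟨Φ, ?_, fun x => ?_, ?_⟩
  · exact (volume_preserving_piFinSuccAbove (fun _ => ℝ) 0).comp
      ((EuclideanSpace.volume_preserving_symm_measurableEquiv_toLp (Fin (n + 1))).comp
        b.measurePreserving_repr)
  · simp [Φ, MeasurableEquiv.piFinSuccAbove_apply, b.repr_apply_apply, hb 0 rfl, real_inner_comm]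
  · have hins (t : ℝ) : LipschitzWith 1 (Fin.insertNth (α := fun _ : Fin (n + 1) => ℝ) 0 t) :=
      LipschitzWith.of_dist_le_mul fun y y' => by
        rw [Fin.dist_insertNth_insertNth, dist_self, NNReal.coe_one, one_mul]
        exact max_le dist_nonneg le_rfl
    exact ⟨_, fun t => (b.repr.symm.lipschitz.comp (PiLp.lipschitzWith_toLp 2 _)).comp (hins t)⟩

theorem volume_setOf_inner_eq (hn : Module.finrank ℝ E = n + 1) {ω : E} (hω : ‖ω‖ = 1) (c : ℝ) :
    volume {x : E | ⟪x, ω⟫ = c} = 0 := by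
  obtain ⟨Φ, hΦ, hfst, -⟩ := exists_measurePreserving_inner_fst hn hω
  have : {x : E | ⟪x, ω⟫ = c} = Φ ⁻¹' ({c} ×ˢ univ) := by ext x; simp [hfst]
  rw [this, hΦ.measure_preimage (measurableSet_singleton c |>.prod .univ).nullMeasurableSet,
    Measure.volume_eq_prod, Measure.prod_prod]
  simp

theorem ae_hausdorffMeasure_inter_inner_eq_zero (hn : Module.finrank ℝ E = n + 1) {ω : E}
    (hω : ‖ω‖ = 1) {A : Set E} (hA : MeasurableSet A) (hA₀ : volume A = 0) :
    ∀ᵐ t : ℝ, μH[n] (A ∩ {x | ⟪x, ω⟫ = t}) = 0 := by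
  obtain ⟨Φ, hΦ, hfst, K, hK⟩ := exists_measurePreserving_inner_fst hn hω
  have hS : (volume.prod volume) (Φ.symm ⁻¹' A) = 0 := by
    rwa [← Measure.volume_eq_prod, (hΦ.symm Φ).measure_preimage hA.nullMeasurableSet]
  filter_upwards [(Measure.measure_prod_null (Φ.symm.measurable hA)).1 hS] with t ht
  have hslice : A ∩ {x | ⟪x, ω⟫ = t} ⊆
      (fun y => Φ.symm (t, y)) '' (Prod.mk t ⁻¹' (Φ.symm ⁻¹' A)) := by
    rintro x ⟨hxA, hxt⟩
    have hx : (t, (Φ x).2) = Φ x := Prod.ext ((hfst x).trans hxt).symm rfl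
    exact ⟨(Φ x).2, by simpa [hx] using hxA, by simp [hx]⟩
  refine measure_mono_null hslice (nonpos_iff_eq_zero.1 ?_)
  calc μH[n] ((fun y => Φ.symm (t, y)) '' (Prod.mk t ⁻¹' (Φ.symm ⁻¹' A)))
      ≤ K ^ (n : ℝ) * μH[n] (Prod.mk t ⁻¹' (Φ.symm ⁻¹' A)) :=
        (hK t).hausdorffMeasure_image_le n.cast_nonneg _
    _ = 0 := by
        have hμH : (μH[n] : Measure (Fin n → ℝ)) = volume := by
          simpa using hausdorffMeasure_pi_real (ι := Fin n)
        simp [hμH, ht]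

theorem volume_inter_sub_lt_inner_pos (hn : Module.finrank ℝ E = n + 1) {ω : E} (hω : ‖ω‖ = 1)
    {D : Set E} (hD : MeasurableSet D) {h b : ℝ} (hb : 0 < b)
    (hslice : ∀ᵐ s ∂volume.restrict (Ioo 0 b), 0 < μH[n] (D ∩ {x | ⟪x, ω⟫ = h - s})) :
    0 < volume (D ∩ {x | h - b < ⟪x, ω⟫}) := by
  refine pos_iff_ne_zero.2 fun h₀ => ?_
  have hnull := ae_hausdorffMeasure_inter_inner_eq_zero hn hω
    (hD.inter (measurableSet_lt measurable_const (by fun_prop))) h₀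
  have hfalse : ∀ᵐ s ∂volume.restrict (Ioo 0 b), False := by
    filter_upwards [ae_restrict_of_ae
        ((Measure.measurePreserving_sub_left volume h).quasiMeasurePreserving.ae hnull),
      hslice, ae_restrict_mem measurableSet_Ioo] with s hs hspos hsb
    have hsub : D ∩ {x | ⟪x, ω⟫ = h - s} ⊆ D ∩ {x | h - b < ⟪x, ω⟫} ∩ {x | ⟪x, ω⟫ = h - s} := by
      rintro x ⟨hxD, hxs : ⟪x, ω⟫ = h - s⟩
      exact ⟨⟨hxD, show h - b < ⟪x, ω⟫ by linarith [hsb.2]⟩, hxs⟩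
    exact hspos.ne' (measure_mono_null hsub hs)
  have hvol := Measure.restrict_eq_zero.1 (ae_eq_bot.1 (eventually_false_iff_eq_bot.1 hfalse))
  rw [Real.volume_Ioo, ENNReal.ofReal_eq_zero] at hvol
  linarith

end Slicing

theorem stmt_0_general
    (D : Set (EuclideanSpace ℝ (Fin 3))) (hDmeas : MeasurableSet D)
    (hDbdd : Bornology.IsBounded D)
    (ω : EuclideanSpace ℝ (Fin 3)) (hω : ‖ω‖ = 1)
    (p : ℝ)
    (hval : ℝ) (hvaldef : hval = sSup ((fun x => ⟪x, ω⟫) '' D))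
    (hreg : ∃ C > (0:ℝ), ∃ δ > (0:ℝ),
      ∀ᵐ s ∂(volume.restrict (Set.Ioo (0:ℝ) δ)),
        ENNReal.ofReal (C * s ^ (p - 1)) ≤
          μH[2] (D ∩ {x | ⟪x, ω⟫ = hval - s})) :
    Tendsto (fun τ : ℝ =>
        (∫ x in D, Real.exp (τ * ⟪x, ω⟫)) /
          Real.sqrt (∫ x in D, Real.exp (2 * τ * ⟪x, ω⟫)))
      atTop (nhds 0) := by
  obtain ⟨C, hC, δ, hδ, hae⟩ := hreg
  have hdim : Module.finrank ℝ (EuclideanSpace ℝ (Fin 3)) = 2 + 1 := by simp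
  have hinner : Measurable fun x : EuclideanSpace ℝ (Fin 3) => ⟪x, ω⟫ := by fun_prop
  have hle : ∀ x ∈ D, ⟪x, ω⟫ ≤ hval := fun x hx => hvaldef ▸
    le_csSup (((innerSL ℝ ω).lipschitz.isBounded_image hDbdd).bddAbove.mono (by
      simp [real_inner_comm])) (mem_image_of_mem _ hx)
  have : IsFiniteMeasure (volume.restrict D) :=
    isFiniteMeasure_restrict.2 hDbdd.measure_lt_top.ne
  refine tendsto_integral_exp_div_sqrt_integral_exp (h := hval) hinner ?_ fun b hb => ?_
  · filter_upwards [ae_restrict_mem hDmeas,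
      ae_restrict_of_ae (measure_eq_zero_iff_ae_notMem.1 (volume_setOf_inner_eq hdim hω hval))]
      with x hxD hx using (hle x hxD).lt_of_ne hx
  · rw [Measure.restrict_apply (measurableSet_lt measurable_const hinner), inter_comm]
    refine (volume_inter_sub_lt_inner_pos hdim hω hDmeas (h := hval) (lt_min hb hδ) ?_).trans_le
      (measure_mono (inter_subset_inter_right _ fun x (hx : hval - min b δ < ⟪x, ω⟫) =>
        show hval - b < ⟪x, ω⟫ by linarith [min_le_left b δ]))
    filter_upwards [ae_restrict_of_ae_restrict_of_subset (Ioo_subset_Ioo_right (min_le_right b δ))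
        hae, ae_restrict_mem measurableSet_Ioo] with s hs hs₀
    exact (ENNReal.ofReal_pos.2 (mul_pos hC (rpow_pos_of_pos hs₀.1 _))).trans_le (by simpa using hs)

/-- If a bounded measurable set `D ⊆ ℝ³` of positive measure is `p`-regular with respect to a
unit vector `ω`, then `‖v₀‖_{L¹(D)} / ‖v₀‖_{L²(D)} → 0` as `τ → ∞`, where `v₀ x = exp (τ x·ω)`.
Here `hval = h_D(ω)` is the support function and the slice measure `μ₂` is realized as the
two-dimensional Hausdorff measure `μH[2]` on the plane `{x : ⟪x,ω⟫ = h_D(ω) - s}`. -/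
theorem stmt_0
    (D : Set (EuclideanSpace ℝ (Fin 3))) (hDmeas : MeasurableSet D)
    (hDbdd : Bornology.IsBounded D) (hDpos : 0 < volume D)
    (ω : EuclideanSpace ℝ (Fin 3)) (hω : ‖ω‖ = 1)
    (p : ℝ) (hp : 1 ≤ p)
    (hval : ℝ) (hvaldef : hval = sSup ((fun x => ⟪x, ω⟫) '' D))
    (hreg : ∃ C > (0:ℝ), ∃ δ > (0:ℝ),
      ∀ᵐ s ∂(volume.restrict (Set.Ioo (0:ℝ) δ)),
        ENNReal.ofReal (C * s ^ (p - 1)) ≤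
          μH[2] (D ∩ {x | ⟪x, ω⟫ = hval - s})) :
    Tendsto (fun τ : ℝ =>
        (∫ x in D, Real.exp (τ * ⟪x, ω⟫)) /
          Real.sqrt (∫ x in D, Real.exp (2 * τ * ⟪x, ω⟫)))
      atTop (nhds 0) :=
  stmt_0_general D hDmeas hDbdd ω hω p hval hvaldef hreg
end

section
/- Let D ⊆ ℝ³ be a bounded Lebesgue-measurable set of positive measure, ω a unit vector, and 1 ≤ p < ∞, and assume D is p-regular with respect to ω. Then for every γ ∈ (0,1) there exist constants C > 0 and τ₀ > 0 such that for all τ ≥ τ₀, ‖v₀‖_{L¹(D)} / ‖v₀‖_{L²(D)} ≤ C (τ^{−γ/2} + e^{−τ^{1−γ}} τ^{p/2}); in particular the ratio is O(τ^{−γ/2}) as τ → ∞. -/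
/-!
Write `φ x = ⟪x, ω⟫`, `h = sup_D φ`, and split `D` at the level `h - 2η` with `η = τ^(-γ)`.
On the slab `{φ > h - 2η}`, Cauchy–Schwarz bounds `∫ e^(τφ)` by `√|slab| · ‖v₀‖₂`, and the slab
has volume `O(η)` because `D` is bounded. Below the slab `e^(τφ) ≤ e^(τ(h - 2η))`, while
`‖v₀‖₂² ≥ e^(2τ(h - η)) |{φ > h - η}|`, and p-regularity gives `|{φ > h - η}| ≳ η^p` once the
areas of the level sets are integrated over `(h - η, h)` (a coarea inequality obtained by
writing `E ≃ ℝ × ℝⁿ` with first coordinate `φ`). Altogether the ratio is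
`≲ η^(1/2) + e^(-τη) η^(-p/2)`.
-/

open MeasureTheory Module
open scoped ENNReal NNReal RealInnerProductSpace

theorem Real.sqrt_rpow {x : ℝ} (hx : 0 ≤ x) (a : ℝ) : √(x ^ a) = x ^ (a / 2) := by
  rw [Real.sqrt_eq_rpow, ← Real.rpow_mul hx]; ring_nf

theorem Real.rpow_neg_le_of_rpow_neg_inv_le {δ γ τ : ℝ} (hδ : 0 < δ) (hγ : 0 < γ)
    (hτ : δ ^ (-γ⁻¹) ≤ τ) : τ ^ (-γ) ≤ δ :=
  calc τ ^ (-γ) ≤ (δ ^ (-γ⁻¹)) ^ (-γ) :=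
        Real.rpow_le_rpow_of_nonpos (by positivity) hτ (by linarith)
    _ = δ := by rw [← Real.rpow_mul hδ.le, neg_mul_neg, inv_mul_cancel₀ hγ.ne', Real.rpow_one]

theorem setLIntegral_Ioo_ofReal_rpow_sub_one {p η : ℝ} (hp : 0 < p) (hη : 0 ≤ η) :
    ∫⁻ s in Set.Ioo 0 η, ENNReal.ofReal (s ^ (p - 1)) = ENNReal.ofReal (η ^ p / p) := by
  have hint : IntegrableOn (fun s : ℝ ↦ s ^ (p - 1)) (Set.Ioo 0 η) :=
    ((intervalIntegrable_iff_integrableOn_Ioc_of_le hη).1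
      (intervalIntegral.intervalIntegrable_rpow' (by linarith))).mono_set Set.Ioo_subset_Ioc_self
  rw [← ofReal_integral_eq_lintegral_ofReal hint
    ((ae_restrict_mem measurableSet_Ioo).mono fun s hs ↦ Real.rpow_nonneg hs.1.le _),
    ← integral_Ioc_eq_integral_Ioo, ← intervalIntegral.integral_of_le hη,
    integral_rpow (Or.inl (by linarith)), sub_add_cancel, Real.zero_rpow hp.ne', sub_zero]

section MeasureSpace

variable {X : Type*} [MeasurableSpace X] {μ : Measure X} {D : Set X} {φ : X → ℝ} {h : ℝ}

theorem integral_le_sqrt_measureReal_univ_mul_sqrt_integral_sq_s1 [IsFiniteMeasure μ] {f : X → ℝ}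
    (hf₀ : 0 ≤ᵐ[μ] f) (hf : MemLp f 2 μ) :
    ∫ x, f x ∂μ ≤ √(μ.real Set.univ) * √(∫ x, f x ^ 2 ∂μ) := by
  have := integral_mul_le_Lp_mul_Lq_of_nonneg Real.HolderConjugate.two_two hf₀
    (g := fun _ ↦ 1) (ae_of_all _ fun _ ↦ zero_le_one) (by simpa using hf) (memLp_const 1)
  simp only [Real.rpow_two, one_pow, mul_one, integral_const, smul_eq_mul] at this
  rwa [Real.sqrt_eq_rpow, Real.sqrt_eq_rpow, mul_comm]

theorem memLp_exp_mul_restrict {s : Set X} (hs : MeasurableSet s) (hμs : μ s ≠ ∞)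
    (hφ : Measurable φ) (hφh : ∀ x ∈ s, φ x ≤ h) {τ : ℝ} (hτ : 0 ≤ τ) (q : ℝ≥0∞) :
    MemLp (fun x ↦ Real.exp (τ * φ x)) q (μ.restrict s) :=
  have : IsFiniteMeasure (μ.restrict s) := isFiniteMeasure_restrict.2 hμs
  .of_bound (by fun_prop) (Real.exp (τ * h)) <| ae_restrict_of_forall_mem hs fun x hx ↦ by
    rw [Real.norm_of_nonneg (Real.exp_nonneg _), Real.exp_le_exp]
    exact mul_le_mul_of_nonneg_left (hφh x hx) hτ

theorem integrableOn_exp_mul {s : Set X} (hs : MeasurableSet s) (hμs : μ s ≠ ∞)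
    (hφ : Measurable φ) (hφh : ∀ x ∈ s, φ x ≤ h) {τ : ℝ} (hτ : 0 ≤ τ) :
    IntegrableOn (fun x ↦ Real.exp (τ * φ x)) s μ :=
  memLp_one_iff_integrable.1 (memLp_exp_mul_restrict hs hμs hφ hφh hτ 1)

theorem exp_mul_sqrt_measureReal_le_sqrt_integral (hD : MeasurableSet D) (hμD : μ D ≠ ∞)
    (hφ : Measurable φ) (hφh : ∀ x ∈ D, φ x ≤ h) {τ : ℝ} (hτ : 0 ≤ τ) (η : ℝ) :
    Real.exp (τ * (h - η)) * √(μ.real (D ∩ {x | h - η < φ x})) ≤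
      √(∫ x in D, Real.exp (2 * τ * φ x) ∂μ) := by
  have hslab : MeasurableSet (D ∩ {x | h - η < φ x}) :=
    hD.inter (measurableSet_lt measurable_const hφ)
  have h2τ : 0 ≤ 2 * τ := by positivity
  rw [Real.le_sqrt (by positivity) (setIntegral_nonneg hD fun _ _ ↦ (Real.exp_pos _).le),
    mul_pow, Real.sq_sqrt measureReal_nonneg, ← Real.exp_nat_mul]
  calc Real.exp (↑2 * (τ * (h - η))) * μ.real (D ∩ {x | h - η < φ x})
      ≤ ∫ x in D ∩ {x | h - η < φ x}, Real.exp (2 * τ * φ x) ∂μ := by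
        refine setIntegral_ge_of_const_le_real hslab
          (measure_ne_top_of_subset Set.inter_subset_left hμD) (fun x hx ↦ ?_)
          (integrableOn_exp_mul hslab (measure_ne_top_of_subset Set.inter_subset_left hμD) hφ
            (fun x hx ↦ hφh x hx.1) h2τ)
        rw [Real.exp_le_exp]
        linarith [mul_le_mul_of_nonneg_left (le_of_lt hx.2) h2τ]
    _ ≤ ∫ x in D, Real.exp (2 * τ * φ x) ∂μ :=
        setIntegral_mono_set (integrableOn_exp_mul hD hμD hφ hφh h2τ)
          (ae_of_all _ fun _ ↦ (Real.exp_pos _).le) Set.inter_subset_left.eventuallyLE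

theorem setIntegral_exp_mul_le_sqrt_mul_sqrt (hD : MeasurableSet D) (hμD : μ D ≠ ∞)
    (hφ : Measurable φ) (hφh : ∀ x ∈ D, φ x ≤ h) {τ : ℝ} (hτ : 0 ≤ τ) (ε : ℝ) :
    ∫ x in D ∩ {x | h - ε < φ x}, Real.exp (τ * φ x) ∂μ ≤
      √(μ.real (D ∩ {x | h - ε < φ x})) * √(∫ x in D, Real.exp (2 * τ * φ x) ∂μ) := by
  have hslab : MeasurableSet (D ∩ {x | h - ε < φ x}) :=
    hD.inter (measurableSet_lt measurable_const hφ)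
  have hfin : μ (D ∩ {x | h - ε < φ x}) ≠ ∞ := measure_ne_top_of_subset Set.inter_subset_left hμD
  have : IsFiniteMeasure (μ.restrict (D ∩ {x | h - ε < φ x})) := isFiniteMeasure_restrict.2 hfin
  have hsq (x : X) : Real.exp (τ * φ x) ^ 2 = Real.exp (2 * τ * φ x) := by
    rw [← Real.exp_nat_mul]; ring_nf
  calc ∫ x in D ∩ {x | h - ε < φ x}, Real.exp (τ * φ x) ∂μ
      ≤ √(μ.real (D ∩ {x | h - ε < φ x})) *
          √(∫ x in D ∩ {x | h - ε < φ x}, Real.exp (2 * τ * φ x) ∂μ) := by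
        have := integral_le_sqrt_measureReal_univ_mul_sqrt_integral_sq_s1
          (ae_of_all _ fun _ ↦ (Real.exp_pos _).le)
          (memLp_exp_mul_restrict hslab hfin hφ (fun x hx ↦ hφh x hx.1) hτ 2)
        rwa [measureReal_restrict_apply_univ, funext hsq] at this
    _ ≤ √(μ.real (D ∩ {x | h - ε < φ x})) * √(∫ x in D, Real.exp (2 * τ * φ x) ∂μ) := by
        refine mul_le_mul_of_nonneg_left (Real.sqrt_le_sqrt ?_) (Real.sqrt_nonneg _)
        exact setIntegral_mono_set (integrableOn_exp_mul hD hμD hφ hφh (by positivity))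
          (ae_of_all _ fun _ ↦ (Real.exp_pos _).le) Set.inter_subset_left.eventuallyLE

theorem setIntegral_exp_mul_le_exp_mul_measureReal (hμD : μ D ≠ ∞) {τ : ℝ} (hτ : 0 ≤ τ)
    (ε : ℝ) :
    ∫ x in D \ {x | h - ε < φ x}, Real.exp (τ * φ x) ∂μ ≤ Real.exp (τ * (h - ε)) * μ.real D := by
  have hbound (x : X) (hx : x ∈ D \ {x | h - ε < φ x}) :
      ‖Real.exp (τ * φ x)‖ ≤ Real.exp (τ * (h - ε)) := by
    rw [Real.norm_of_nonneg (Real.exp_nonneg _), Real.exp_le_exp]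
    exact mul_le_mul_of_nonneg_left (not_lt.1 hx.2) hτ
  calc ∫ x in D \ {x | h - ε < φ x}, Real.exp (τ * φ x) ∂μ
      ≤ Real.exp (τ * (h - ε)) * μ.real (D \ {x | h - ε < φ x}) :=
        (le_abs_self _).trans (norm_setIntegral_le_of_norm_le_const
          (measure_ne_top_of_subset Set.sdiff_subset hμD).lt_top hbound)
    _ ≤ Real.exp (τ * (h - ε)) * μ.real D :=
        mul_le_mul_of_nonneg_left (measureReal_mono Set.sdiff_subset hμD) (Real.exp_nonneg _)

theorem integral_exp_div_sqrt_le_s1 (hD : MeasurableSet D) (hμD : μ D ≠ ∞) (hφ : Measurable φ)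
    (hφh : ∀ x ∈ D, φ x ≤ h) {τ ε η : ℝ} (hτ : 0 ≤ τ)
    (hη : 0 < μ.real (D ∩ {x | h - η < φ x})) :
    (∫ x in D, Real.exp (τ * φ x) ∂μ) / √(∫ x in D, Real.exp (2 * τ * φ x) ∂μ) ≤
      √(μ.real (D ∩ {x | h - ε < φ x})) +
        μ.real D * Real.exp (-(τ * (ε - η))) / √(μ.real (D ∩ {x | h - η < φ x})) := by
  have hQ := exp_mul_sqrt_measureReal_le_sqrt_integral hD hμD hφ hφh hτ η
  have hQ_pos : 0 < √(∫ x in D, Real.exp (2 * τ * φ x) ∂μ) :=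
    (mul_pos (Real.exp_pos _) (Real.sqrt_pos.2 hη)).trans_le hQ
  rw [← integral_inter_add_sdiff (measurableSet_lt measurable_const hφ)
    (integrableOn_exp_mul hD hμD hφ hφh hτ), add_div]
  refine add_le_add ((div_le_iff₀ hQ_pos).2
    (setIntegral_exp_mul_le_sqrt_mul_sqrt hD hμD hφ hφh hτ ε)) ?_
  calc _ ≤ Real.exp (τ * (h - ε)) * μ.real D /
          (Real.exp (τ * (h - η)) * √(μ.real (D ∩ {x | h - η < φ x}))) :=
        div_le_div₀ (by positivity) (setIntegral_exp_mul_le_exp_mul_measureReal hμD hτ ε)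
          (by positivity) hQ
    _ = _ := by
        rw [show τ * (h - ε) = -(τ * (ε - η)) + τ * (h - η) by ring, Real.exp_add]
        field_simp

theorem exists_integral_exp_div_sqrt_le_rpow (hD : MeasurableSet D) (hμD : μ D ≠ ∞)
    (hφ : Measurable φ) (hφh : ∀ x ∈ D, φ x ≤ h) {K c δ p : ℝ}
    (hupper : ∀ ε > 0, μ.real (D ∩ {x | h - ε < φ x}) ≤ K * ε) (hc : 0 < c) (hδ : 0 < δ)
    (hlower : ∀ η ∈ Set.Ioc 0 δ, c * η ^ p ≤ μ.real (D ∩ {x | h - η < φ x})) (hp : 0 ≤ p)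
    {γ : ℝ} (hγ₀ : 0 < γ) (hγ₁ : γ ≤ 1) :
    ∃ C > (0 : ℝ), ∃ τ₀ > (0 : ℝ), ∀ τ : ℝ, τ₀ ≤ τ →
      (∫ x in D, Real.exp (τ * φ x) ∂μ) / √(∫ x in D, Real.exp (2 * τ * φ x) ∂μ) ≤
        C * (τ ^ (-(γ / 2)) + Real.exp (-(τ ^ (1 - γ))) * τ ^ (p / 2)) := by
  set c₁ := √(2 * K)
  set c₂ := μ.real D / √c
  refine ⟨c₁ + c₂ + 1, by positivity, max 1 (δ ^ (-γ⁻¹)), by positivity, fun τ hτ ↦ ?_⟩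
  have hτ₁ : 1 ≤ τ := le_of_max_le_left hτ
  have hτ₀ : 0 < τ := zero_lt_one.trans_le hτ₁
  set η := τ ^ (-γ)
  have hη₀ : 0 < η := Real.rpow_pos_of_pos hτ₀ _
  have hmη := hlower η ⟨hη₀, Real.rpow_neg_le_of_rpow_neg_inv_le hδ hγ₀ (le_of_max_le_right hτ)⟩
  have hcη : 0 < c * η ^ p := by positivity
  have hnear : √(μ.real (D ∩ {x | h - 2 * η < φ x})) ≤ c₁ * τ ^ (-(γ / 2)) := by
    calc √(μ.real (D ∩ {x | h - 2 * η < φ x})) ≤ √(2 * K * η) :=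
          Real.sqrt_le_sqrt ((hupper _ (by positivity)).trans_eq (by ring))
      _ = c₁ * τ ^ (-(γ / 2)) := by
          rw [Real.sqrt_mul' _ hη₀.le, Real.sqrt_rpow hτ₀.le, neg_div]
  have hfar : μ.real D * Real.exp (-(τ * (2 * η - η))) / √(μ.real (D ∩ {x | h - η < φ x})) ≤
      c₂ * (Real.exp (-(τ ^ (1 - γ))) * τ ^ (p / 2)) := by
    have hτη : τ * (2 * η - η) = τ ^ (1 - γ) := by
      rw [sub_eq_add_neg (1 : ℝ), Real.rpow_add hτ₀, Real.rpow_one]; ring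
    calc μ.real D * Real.exp (-(τ * (2 * η - η))) / √(μ.real (D ∩ {x | h - η < φ x}))
        ≤ μ.real D * Real.exp (-(τ ^ (1 - γ))) / √(c * η ^ p) := by
          rw [hτη]; gcongr
      _ = c₂ * (Real.exp (-(τ ^ (1 - γ))) * τ ^ (γ * p / 2)) := by
          rw [Real.sqrt_mul hc.le, Real.sqrt_rpow hη₀.le, ← Real.rpow_mul hτ₀.le, neg_mul,
            Real.rpow_neg hτ₀.le]
          simp only [c₂]
          field_simp
      _ ≤ c₂ * (Real.exp (-(τ ^ (1 - γ))) * τ ^ (p / 2)) := by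
          gcongr
          exact mul_le_of_le_one_left hp hγ₁
  calc _ ≤ _ := integral_exp_div_sqrt_le_s1 hD hμD hφ hφh hτ₀.le (hcη.trans_le hmη)
    _ ≤ c₁ * τ ^ (-(γ / 2)) + c₂ * (Real.exp (-(τ ^ (1 - γ))) * τ ^ (p / 2)) :=
        add_le_add hnear hfar
    _ ≤ _ := by
        have : 0 ≤ τ ^ (-(γ / 2)) := by positivity
        have : 0 ≤ Real.exp (-(τ ^ (1 - γ))) * τ ^ (p / 2) := by positivity
        nlinarith [Real.sqrt_nonneg (2 * K), show 0 ≤ c₂ by positivity]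

end MeasureSpace

section Geometry

variable {E : Type*} [NormedAddCommGroup E] [InnerProductSpace ℝ E] [FiniteDimensional ℝ E]
  [MeasurableSpace E] [BorelSpace E] {n : ℕ}

/-- The transverse coordinates live in `Fin n → ℝ` with the sup metric, where `μH[n]` is
Lebesgue measure (`hausdorffMeasure_pi_real`). -/
theorem exists_measurePreserving_inner_coordinates (hE : finrank ℝ E = n + 1) {ω : E}
    (hω : ‖ω‖ = 1) :
    ∃ Φ : E ≃ᵐ ℝ × (Fin n → ℝ), MeasurePreserving Φ ∧ (∀ x, (Φ x).1 = ⟪x, ω⟫) ∧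
      (∀ x i, |(Φ x).2 i| ≤ ‖x‖) ∧ ∀ t, LipschitzWith (n + 1) fun z ↦ Φ.symm (t, z) := by
  have hunit : Orthonormal ℝ (({0} : Set (Fin (n + 1))).domRestrict fun _ ↦ ω) :=
    ⟨fun _ ↦ hω, fun i j hij ↦ (hij (Subsingleton.elim i j)).elim⟩
  obtain ⟨B, hB⟩ := hunit.exists_orthonormalBasis_extension_of_card_eq (by simpa using hE)
  let Φ : E ≃ᵐ ℝ × (Fin n → ℝ) :=
    (B.measurableEquiv.trans (MeasurableEquiv.toLp 2 (Fin (n + 1) → ℝ)).symm).trans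
      (MeasurableEquiv.piFinSuccAbove (fun _ ↦ ℝ) 0)
  refine ⟨Φ, ?_, fun x ↦ ?_, fun x i ↦ ?_, fun t ↦ ?_⟩
  · exact (volume_preserving_piFinSuccAbove (fun _ ↦ ℝ) 0).comp
      ((EuclideanSpace.volume_preserving_symm_measurableEquiv_toLp _).comp
        B.measurePreserving_measurableEquiv)
  · change B.repr x 0 = _
    rw [B.repr_apply_apply, hB 0 rfl, real_inner_comm]
  · change |B.repr x (Fin.succAbove 0 i)| ≤ ‖x‖
    rw [← B.repr.norm_map x, ← Real.norm_eq_abs]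
    exact PiLp.norm_apply_le _ _
  · have hinsert : LipschitzWith 1 (Fin.insertNth (α := fun _ : Fin (n + 1) ↦ ℝ) 0 t) := by
      refine LipschitzWith.of_dist_le_mul fun z z' ↦ ?_
      rw [NNReal.coe_one, one_mul, dist_pi_le_iff dist_nonneg]
      refine Fin.cases (by simp) (fun j ↦ ?_)
      simpa using dist_le_pi_dist z z' j
    have htoLp := (PiLp.lipschitzWith_toLp 2 fun _ : Fin (n + 1) ↦ ℝ).weaken
      (K' := n + 1) ?_
    · have h := B.repr.symm.lipschitz.comp (htoLp.comp hinsert)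
      rwa [one_mul, mul_one] at h
    · rw [Fintype.card_fin, ← NNReal.coe_le_coe]
      push_cast
      exact Real.rpow_le_self_of_one_le (by linarith [n.cast_nonneg (α := ℝ)]) (by norm_num)

theorem measureReal_inter_inner_gt_le (hE : finrank ℝ E = n + 1) {ω : E} (hω : ‖ω‖ = 1)
    {D : Set E} {R c ε : ℝ} (hR₀ : 0 ≤ R) (hε : 0 ≤ ε) (hR : ∀ x ∈ D, ‖x‖ ≤ R)
    (hc : ∀ x ∈ D, ⟪x, ω⟫ ≤ c) :
    volume.real (D ∩ {x | c - ε < ⟪x, ω⟫}) ≤ (2 * R) ^ n * ε := by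
  obtain ⟨Φ, hΦ, hfst, hsnd, -⟩ := exists_measurePreserving_inner_coordinates hE hω
  set box := Set.Ioc (c - ε) c ×ˢ Set.univ.pi fun _ : Fin n ↦ Set.Icc (-R) R
  have hsub : D ∩ {x | c - ε < ⟪x, ω⟫} ⊆ Φ ⁻¹' box := by
    rintro x ⟨hxD, hx : c - ε < ⟪x, ω⟫⟩
    refine ⟨by rw [hfst]; exact ⟨hx, hc x hxD⟩, fun i _ ↦ abs_le.1 ((hsnd x i).trans (hR x hxD))⟩
  refine ENNReal.toReal_le_of_le_ofReal (by positivity) ?_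
  calc volume (D ∩ {x | c - ε < ⟪x, ω⟫}) ≤ volume (Φ ⁻¹' box) := measure_mono hsub
    _ = volume box :=
      hΦ.measure_preimage (measurableSet_Ioc.prod (MeasurableSet.univ_pi fun _ ↦
        measurableSet_Icc)).nullMeasurableSet
    _ = ENNReal.ofReal ((2 * R) ^ n * ε) := by
      rw [Measure.volume_eq_prod, Measure.prod_prod, Real.volume_Ioc, volume_pi_pi,
        Real.volume_Icc, Finset.prod_const, Finset.card_univ, Fintype.card_fin, sub_sub_cancel,
        sub_neg_eq_add, ← two_mul, ← ENNReal.ofReal_pow (by positivity),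
        ← ENNReal.ofReal_mul hε, mul_comm]

theorem lintegral_hausdorffMeasure_inter_inner_eq_le (hE : finrank ℝ E = n + 1) {ω : E}
    (hω : ‖ω‖ = 1) {A : Set E} (hA : MeasurableSet A) :
    ∫⁻ t, μH[n] (A ∩ {x | ⟪x, ω⟫ = t}) ≤ (n + 1) ^ n * volume A := by
  obtain ⟨Φ, hΦ, hfst, -, hlip⟩ := exists_measurePreserving_inner_coordinates hE hω
  have hslice (t : ℝ) : A ∩ {x | ⟪x, ω⟫ = t} =
      (fun z ↦ Φ.symm (t, z)) '' (Prod.mk t ⁻¹' (Φ.symm ⁻¹' A)) := by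
    ext x
    constructor
    · rintro ⟨hxA, rfl⟩
      refine ⟨(Φ x).2, ?_, ?_⟩ <;> rw [← hfst x]
      · simpa using hxA
      · simp
    · rintro ⟨z, hz, rfl⟩
      exact ⟨hz, show ⟪Φ.symm (t, z), ω⟫ = t by rw [← hfst, Φ.apply_symm_apply]⟩
  have hslice_le (t : ℝ) : μH[n] (A ∩ {x | ⟪x, ω⟫ = t}) ≤
      (n + 1) ^ n * volume (Prod.mk t ⁻¹' (Φ.symm ⁻¹' A)) := by
    rw [hslice, ← hausdorffMeasure_pi_real (ι := Fin n)]
    simpa [← ENNReal.rpow_natCast] using (hlip t).hausdorffMeasure_image_le (d := n) n.cast_nonneg _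
  calc ∫⁻ t, μH[n] (A ∩ {x | ⟪x, ω⟫ = t})
      ≤ ∫⁻ t, (n + 1) ^ n * volume (Prod.mk t ⁻¹' (Φ.symm ⁻¹' A)) := lintegral_mono hslice_le
    _ = (n + 1) ^ n * volume (Φ.symm ⁻¹' A) := by
      rw [lintegral_const_mul' _ _ (by simp), Measure.volume_eq_prod,
        Measure.prod_apply (Φ.symm.measurable hA)]
    _ = (n + 1) ^ n * volume A := by
      rw [(hΦ.symm Φ).measure_preimage hA.nullMeasurableSet]

theorem ofReal_mul_rpow_le_volume_inter_inner_gt (hE : finrank ℝ E = n + 1) {ω : E}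
    (hω : ‖ω‖ = 1) {D : Set E} (hD : MeasurableSet D) {C δ p h η : ℝ} (hp : 0 < p)
    (hreg : ∀ᵐ s ∂volume.restrict (Set.Ioo 0 δ),
      ENNReal.ofReal (C * s ^ (p - 1)) ≤ μH[n] (D ∩ {x | ⟪x, ω⟫ = h - s}))
    (hη : η ∈ Set.Ioc 0 δ) :
    ENNReal.ofReal (C * (η ^ p / p)) ≤ (n + 1) ^ n * volume (D ∩ {x | h - η < ⟪x, ω⟫}) := by
  have hslab : MeasurableSet (D ∩ {x | h - η < ⟪x, ω⟫}) :=
    hD.inter (measurableSet_lt measurable_const (measurable_id.inner measurable_const))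
  calc ENNReal.ofReal (C * (η ^ p / p))
      = ∫⁻ s in Set.Ioo 0 η, ENNReal.ofReal (C * s ^ (p - 1)) := by
        rw [ENNReal.ofReal_mul' (div_nonneg (Real.rpow_nonneg hη.1.le _) hp.le),
          ← setLIntegral_Ioo_ofReal_rpow_sub_one hp hη.1.le,
          ← lintegral_const_mul' _ _ ENNReal.ofReal_ne_top]
        refine setLIntegral_congr_fun measurableSet_Ioo fun s hs ↦ ?_
        rw [ENNReal.ofReal_mul' (Real.rpow_nonneg hs.1.le _)]
    _ ≤ ∫⁻ s in Set.Ioo 0 η, μH[n] (D ∩ {x | ⟪x, ω⟫ = h - s}) :=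
        lintegral_mono_ae (ae_restrict_of_ae_restrict_of_subset
          (Set.Ioo_subset_Ioo_right hη.2) hreg)
    _ = ∫⁻ t in Set.Ioo (h - η) h, μH[n] (D ∩ {x | ⟪x, ω⟫ = t}) := by
        have := (Measure.measurePreserving_sub_left volume h).setLIntegral_comp_preimage_emb
          (MeasurableEquiv.subLeft h).measurableEmbedding
          (fun t ↦ μH[n] (D ∩ {x | ⟪x, ω⟫ = t})) (Set.Ioo (h - η) h)
        rwa [Set.preimage_const_sub_Ioo, sub_self, sub_sub_cancel] at this
    _ ≤ ∫⁻ t in Set.Ioo (h - η) h, μH[n] ((D ∩ {x | h - η < ⟪x, ω⟫}) ∩ {x | ⟪x, ω⟫ = t}) := by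
        refine setLIntegral_mono' measurableSet_Ioo fun t ht ↦ measure_mono ?_
        rintro x ⟨hxD, hxt : ⟪x, ω⟫ = t⟩
        exact ⟨⟨hxD, show h - η < ⟪x, ω⟫ from hxt ▸ ht.1⟩, hxt⟩
    _ ≤ ∫⁻ t, μH[n] ((D ∩ {x | h - η < ⟪x, ω⟫}) ∩ {x | ⟪x, ω⟫ = t}) :=
        setLIntegral_le_lintegral _ _
    _ ≤ (n + 1) ^ n * volume (D ∩ {x | h - η < ⟪x, ω⟫}) :=
        lintegral_hausdorffMeasure_inter_inner_eq_le hE hω hslab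

theorem mul_rpow_le_measureReal_inter_inner_gt (hE : finrank ℝ E = n + 1) {ω : E}
    (hω : ‖ω‖ = 1) {D : Set E} (hD : MeasurableSet D) (hμD : volume D ≠ ∞) {C δ p h η : ℝ}
    (hp : 0 < p)
    (hreg : ∀ᵐ s ∂volume.restrict (Set.Ioo 0 δ),
      ENNReal.ofReal (C * s ^ (p - 1)) ≤ μH[n] (D ∩ {x | ⟪x, ω⟫ = h - s}))
    (hη : η ∈ Set.Ioc 0 δ) :
    C / (p * (n + 1) ^ n) * η ^ p ≤ volume.real (D ∩ {x | h - η < ⟪x, ω⟫}) := by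
  have := ofReal_mul_rpow_le_volume_inter_inner_gt hE hω hD hp hreg hη
  rw [ENNReal.ofReal_le_iff_le_toReal (ENNReal.mul_ne_top (by simp)
    (measure_ne_top_of_subset Set.inter_subset_left hμD))] at this
  rw [ENNReal.toReal_mul, ENNReal.toReal_pow, ← measureReal_def,
    show ((n : ℝ≥0∞) + 1).toReal = n + 1 by norm_cast] at this
  rw [show C / (p * (n + 1) ^ n) * η ^ p = C * (η ^ p / p) / (n + 1) ^ n by field_simp,
    div_le_iff₀' (by positivity)]
  exact this

end Geometry

theorem stmt_1_general
    (D : Set (EuclideanSpace ℝ (Fin 3))) (hDmeas : MeasurableSet D)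
    (hDbdd : Bornology.IsBounded D)
    (ω : EuclideanSpace ℝ (Fin 3)) (hω : ‖ω‖ = 1)
    (p : ℝ) (hp : 1 ≤ p)
    (hval : ℝ) (hvaldef : hval = sSup ((fun x => ⟪x, ω⟫) '' D))
    (hreg : ∃ C > (0:ℝ), ∃ δ > (0:ℝ),
      ∀ᵐ s ∂(volume.restrict (Set.Ioo (0:ℝ) δ)),
        ENNReal.ofReal (C * s ^ (p - 1)) ≤
          μH[2] (D ∩ {x | ⟪x, ω⟫ = hval - s})) :
    ∀ γ : ℝ, 0 < γ → γ < 1 →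
      ∃ C > (0:ℝ), ∃ τ₀ > (0:ℝ), ∀ τ : ℝ, τ₀ ≤ τ →
        (∫ x in D, Real.exp (τ * ⟪x, ω⟫)) /
            Real.sqrt (∫ x in D, Real.exp (2 * τ * ⟪x, ω⟫)) ≤
          C * (τ ^ (-(γ / 2)) + Real.exp (-(τ ^ (1 - γ))) * τ ^ (p / 2)) := by
  intro γ hγ₀ hγ₁
  obtain ⟨C₀, hC₀, δ, hδ, hae⟩ := hreg
  obtain ⟨R, hR₀, hDR⟩ := hDbdd.subset_closedBall_lt 0 0
  have hR (x) (hx : x ∈ D) : ‖x‖ ≤ R := by simpa using hDR hx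
  have hφh (x) (hx : x ∈ D) : ⟪x, ω⟫ ≤ hval := by
    refine hvaldef ▸ le_csSup ⟨R, ?_⟩ (Set.mem_image_of_mem _ hx)
    rintro _ ⟨y, hy, rfl⟩
    exact (real_inner_le_norm y ω).trans (by rw [hω, mul_one]; exact hR y hy)
  have hE : finrank ℝ (EuclideanSpace ℝ (Fin 3)) = 2 + 1 := by simp
  have hμD : volume D ≠ ∞ := hDbdd.measure_lt_top.ne
  refine exists_integral_exp_div_sqrt_le_rpow hDmeas hμD (measurable_id.inner measurable_const)
    hφh (fun ε hε ↦ measureReal_inter_inner_gt_le hE hω hR₀.le hε.le hR hφh) ?_ hδ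
    (fun η hη ↦ mul_rpow_le_measureReal_inter_inner_gt (C := C₀) hE hω hDmeas hμD (by linarith)
      (by exact_mod_cast hae) hη) (by linarith) hγ₀ hγ₁.le
  positivity

/-- Quantitative version: for every γ ∈ (0,1) there are C > 0 and τ₀ > 0 such that for all
τ ≥ τ₀ the ratio ‖v₀‖_{L¹(D)}/‖v₀‖_{L²(D)} is at most C (τ^{-γ/2} + e^{-τ^{1-γ}} τ^{p/2}). -/
theorem stmt_1
    (D : Set (EuclideanSpace ℝ (Fin 3))) (hDmeas : MeasurableSet D)
    (hDbdd : Bornology.IsBounded D) (hDpos : 0 < volume D)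
    (ω : EuclideanSpace ℝ (Fin 3)) (hω : ‖ω‖ = 1)
    (p : ℝ) (hp : 1 ≤ p)
    (hval : ℝ) (hvaldef : hval = sSup ((fun x => ⟪x, ω⟫) '' D))
    (hreg : ∃ C > (0:ℝ), ∃ δ > (0:ℝ),
      ∀ᵐ s ∂(volume.restrict (Set.Ioo (0:ℝ) δ)),
        ENNReal.ofReal (C * s ^ (p - 1)) ≤
          μH[2] (D ∩ {x | ⟪x, ω⟫ = hval - s})) :
    ∀ γ : ℝ, 0 < γ → γ < 1 →
      ∃ C > (0:ℝ), ∃ τ₀ > (0:ℝ), ∀ τ : ℝ, τ₀ ≤ τ →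
        (∫ x in D, Real.exp (τ * ⟪x, ω⟫)) /
            Real.sqrt (∫ x in D, Real.exp (2 * τ * ⟪x, ω⟫)) ≤
          C * (τ ^ (-(γ / 2)) + Real.exp (-(τ ^ (1 - γ))) * τ ^ (p / 2)) :=
  stmt_1_general D hDmeas hDbdd ω hω p hp hval hvaldef hreg
end

section
/- Let D ⊆ ℝ³ be a bounded Lebesgue-measurable set of positive measure, ω a unit vector, and 1 ≤ p < ∞, and assume D is p-regular with respect to ω. Then there exist constants C > 0 and τ₀ > 0 such that for all τ ≥ τ₀, e^{−τ h_D(ω)} ‖v₀‖_{L²(D)} ≥ C τ^{−p/2}, where v₀(x) = e^{τ x·ω}. -/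
open MeasureTheory Filter
open scoped ENNReal NNReal RealInnerProductSpace

/-!
Choose an orthonormal basis `b` with `b 0 = ω`. By Fubini in the coordinates of `b`, the integral
of `e^{2τ x·ω}` over `D` is `∫ e^{2τ c} ν(c) dc`, where `ν(c)` is the volume of the slice of `D` at
height `c`; the slice map is Lipschitz, so `ν(h - s) ≳ μ₂(S_ω(s)) ≳ s^{p-1}` for small `s`.
Keeping only the heights `h - s` with `s ∈ (1/(4τ), 1/(2τ))`, where `e^{2τ c} ≥ e^{2τh - 1}`, gives
`∫_D e^{2τ x·ω} ≳ τ^{-p} e^{2τh}`; take square roots.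
-/

lemma exists_orthonormalBasis_apply_zero_eq {F : Type*} [NormedAddCommGroup F]
    [InnerProductSpace ℝ F] {n : ℕ} (hF : Module.finrank ℝ F = n + 1) {v : F} (hv : ‖v‖ = 1) :
    ∃ b : OrthonormalBasis (Fin (n + 1)) ℝ F, b 0 = v := by
  have := Module.finite_of_finrank_eq_succ hF
  obtain ⟨b, hb⟩ := Orthonormal.exists_orthonormalBasis_extension_of_card_eq
    (ι := Fin (n + 1)) (v := fun _ => v) (s := {0}) (by simpa using hF)
    ⟨fun _ => hv, fun i j hij => absurd (Subtype.ext (i.2.trans j.2.symm)) hij⟩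
  exact ⟨b, hb 0 rfl⟩

lemma ofReal_le_lintegral_exp_mul {ν : ℝ → ℝ≥0∞} {h C δ p t : ℝ} (hp : 1 ≤ p) (hC : 0 ≤ C)
    (hδ : 0 < δ) (hν : ∀ᵐ s ∂volume.restrict (Set.Ioo 0 δ),
      ENNReal.ofReal (C * s ^ (p - 1)) ≤ ν (h - s)) (ht : δ⁻¹ ≤ t) :
    ENNReal.ofReal (C * Real.exp (-1) * (2 * t) ^ (-p) * Real.exp (t * h)) ≤
      ∫⁻ c, ENNReal.ofReal (Real.exp (t * c)) * ν c := by
  have ht₀ : 0 < t := (inv_pos.2 hδ).trans_le ht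
  set a := (2 * t)⁻¹ with ha
  have ha₀ : 0 < a := by positivity
  have hta : t⁻¹ = a + a := by rw [ha]; field_simp; ring
  set I := Set.Ioo a t⁻¹
  have hIδ : I ⊆ Set.Ioo 0 δ := fun s hs =>
    ⟨ha₀.trans hs.1, hs.2.trans_le (inv_le_of_inv_le₀ hδ ht)⟩
  set K := ENNReal.ofReal (Real.exp (t * h - 1) * (C * a ^ (p - 1))) with hKdef
  have hK : ∀ᵐ s ∂volume.restrict I,
      K ≤ ENNReal.ofReal (Real.exp (t * (h - s))) * ν (h - s) := by
    filter_upwards [ae_restrict_of_ae_restrict_of_subset hIδ hν,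
      ae_restrict_mem measurableSet_Ioo] with s hνs hs
    rw [hKdef, ENNReal.ofReal_mul (Real.exp_nonneg _)]
    refine mul_le_mul' (ENNReal.ofReal_le_ofReal (Real.exp_le_exp.2 ?_)) (le_trans ?_ hνs)
    · nlinarith [mul_inv_cancel₀ ht₀.ne', hs.2]
    · exact ENNReal.ofReal_le_ofReal (mul_le_mul_of_nonneg_left
        (Real.rpow_le_rpow ha₀.le hs.1.le (by linarith)) hC)
  have hvol : volume I = ENNReal.ofReal a := by
    rw [Real.volume_Ioo, hta, add_sub_cancel_left]
  have hconst : C * Real.exp (-1) * (2 * t) ^ (-p) * Real.exp (t * h) =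
      Real.exp (t * h - 1) * (C * a ^ (p - 1)) * a := by
    rw [Real.rpow_sub_one ha₀.ne', ha, Real.inv_rpow (by positivity),
      ← Real.rpow_neg (by positivity), sub_eq_add_neg, Real.exp_add]
    field_simp
  calc ENNReal.ofReal (C * Real.exp (-1) * (2 * t) ^ (-p) * Real.exp (t * h))
      = K * volume I := by
        rw [hvol, hconst, ENNReal.ofReal_mul (by positivity)]
    _ = ∫⁻ _ in I, K := (setLIntegral_const I K).symm
    _ ≤ ∫⁻ s in I, ENNReal.ofReal (Real.exp (t * (h - s))) * ν (h - s) :=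
        lintegral_mono_ae hK
    _ ≤ ∫⁻ s, ENNReal.ofReal (Real.exp (t * (h - s))) * ν (h - s) :=
        setLIntegral_le_lintegral _ _
    _ = ∫⁻ c, ENNReal.ofReal (Real.exp (t * c)) * ν c :=
        lintegral_sub_left_eq_self (fun c => ENNReal.ofReal (Real.exp (t * c)) * ν c) h

lemma sqrt_mul_rpow_neg_half_le {M τ h I p : ℝ} (hτ : 0 < τ)
    (hI : M * τ ^ (-p) * Real.exp (2 * τ * h) ≤ I) :
    Real.sqrt M * τ ^ (-(p / 2)) ≤ Real.exp (-(τ * h)) * Real.sqrt I := by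
  have hsq : Real.exp (-(τ * h)) = Real.sqrt (Real.exp (-(2 * τ * h))) := by
    rw [← Real.sqrt_sq (Real.exp_nonneg _), ← Real.exp_nat_mul]; ring_nf
  have hτp : τ ^ (-(p / 2)) = Real.sqrt (τ ^ (-p)) := by
    rw [Real.sqrt_eq_rpow, ← Real.rpow_mul hτ.le]; ring_nf
  rw [hsq, hτp, ← Real.sqrt_mul' _ (Real.rpow_nonneg hτ.le _),
    ← Real.sqrt_mul (Real.exp_nonneg _)]
  refine Real.sqrt_le_sqrt ?_
  calc M * τ ^ (-p) = Real.exp (-(2 * τ * h)) * (M * τ ^ (-p) * Real.exp (2 * τ * h)) := by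
        rw [Real.exp_neg]; field_simp
    _ ≤ Real.exp (-(2 * τ * h)) * I := mul_le_mul_of_nonneg_left hI (Real.exp_nonneg _)

namespace OrthonormalBasis

variable {F : Type*} [NormedAddCommGroup F] [InnerProductSpace ℝ F] [MeasurableSpace F]
  [BorelSpace F] {n : ℕ} (b : OrthonormalBasis (Fin (n + 1)) ℝ F)

noncomputable def measurableEquivProd : ℝ × (Fin n → ℝ) ≃ᵐ F :=
  (MeasurableEquiv.piFinSuccAbove (fun _ => ℝ) 0).symm.trans
    ((MeasurableEquiv.toLp 2 (Fin (n + 1) → ℝ)).trans b.measurableEquiv.symm)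

lemma measurableEquivProd_apply (c : ℝ) (y : Fin n → ℝ) :
    b.measurableEquivProd (c, y) = b.repr.symm (WithLp.toLp 2 (Fin.insertNth 0 c y)) := rfl

lemma measurePreserving_measurableEquivProd [FiniteDimensional ℝ F] :
    MeasurePreserving b.measurableEquivProd volume volume :=
  ((volume_preserving_piFinSuccAbove (fun _ : Fin (n + 1) => ℝ) 0).symm _).trans
    ((PiLp.volume_preserving_toLp (Fin (n + 1))).trans b.measurePreserving_repr_symm)

lemma inner_measurableEquivProd (z : ℝ × (Fin n → ℝ)) :
    ⟪b.measurableEquivProd z, b 0⟫ = z.1 := by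
  rw [real_inner_comm, ← b.repr_apply_apply, measurableEquivProd_apply,
    LinearIsometryEquiv.apply_symm_apply]
  simp

lemma lipschitzWith_measurableEquivProd_mk (c : ℝ) :
    LipschitzWith (NNReal.sqrt (n + 1)) (fun y => b.measurableEquivProd (c, y)) := by
  have hinsert : LipschitzWith 1 (fun y : Fin n → ℝ => Fin.insertNth (α := fun _ => ℝ) 0 c y) :=
    LipschitzWith.of_dist_le_mul fun y y' => by
      rw [Fin.dist_insertNth_insertNth, dist_self, max_eq_right dist_nonneg, NNReal.coe_one,
        one_mul]
  have htoLp := PiLp.lipschitzWith_toLp 2 (fun _ : Fin (n + 1) => ℝ)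
  have hrepr : LipschitzWith 1 b.repr.symm := b.repr.symm.isometry.lipschitz
  convert (hrepr.comp htoLp).comp hinsert using 1
  · simp [NNReal.sqrt_eq_rpow]
  · rfl

lemma inter_setOf_inner_eq_image (D : Set F) (c : ℝ) :
    D ∩ {x | ⟪x, b 0⟫ = c} =
      (fun y => b.measurableEquivProd (c, y)) '' {y | b.measurableEquivProd (c, y) ∈ D} := by
  ext x
  constructor
  · rintro ⟨hxD, hxc⟩
    obtain ⟨⟨c', y⟩, rfl⟩ := b.measurableEquivProd.surjective x
    rw [Set.mem_ofPred_eq, inner_measurableEquivProd] at hxc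
    subst hxc
    exact ⟨y, hxD, rfl⟩
  · rintro ⟨y, hyD, rfl⟩
    exact ⟨hyD, b.inner_measurableEquivProd (c, y)⟩

lemma hausdorffMeasure_inter_setOf_inner_eq_le (D : Set F) (c : ℝ) :
    μH[n] (D ∩ {x | ⟪x, b 0⟫ = c}) ≤
      ((NNReal.sqrt (n + 1) ^ n : ℝ≥0) : ℝ≥0∞) *
        volume {y | b.measurableEquivProd (c, y) ∈ D} := by
  rw [inter_setOf_inner_eq_image, ← hausdorffMeasure_pi_real]
  refine ((b.lipschitzWith_measurableEquivProd_mk c).hausdorffMeasure_image_le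
    (Nat.cast_nonneg n) _).trans_eq ?_
  rw [ENNReal.rpow_natCast]
  simp

lemma setLIntegral_comp_inner_eq [FiniteDimensional ℝ F] {D : Set F} (hD : MeasurableSet D)
    {w : ℝ → ℝ≥0∞} (hw : Measurable w) :
    ∫⁻ x in D, w ⟪x, b 0⟫ = ∫⁻ c, w c * volume {y | b.measurableEquivProd (c, y) ∈ D} := by
  set e := b.measurableEquivProd
  have hS : MeasurableSet (e ⁻¹' D) := e.measurable hD
  calc ∫⁻ x in D, w ⟪x, b 0⟫
      = ∫⁻ z in e ⁻¹' D, w z.1 := by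
        rw [← (b.measurePreserving_measurableEquivProd).setLIntegral_comp_preimage_emb
          e.measurableEmbedding]
        simp only [e, inner_measurableEquivProd]
    _ = ∫⁻ c, ∫⁻ y, (e ⁻¹' D).indicator (fun z => w z.1) (c, y) := by
        rw [← lintegral_indicator hS, Measure.volume_eq_prod]
        exact lintegral_prod _ ((hw.comp measurable_fst).indicator hS).aemeasurable
    _ = ∫⁻ c, w c * volume {y | e (c, y) ∈ D} := by
        refine lintegral_congr fun c => ?_
        change _ = w c * volume (Prod.mk c ⁻¹' (e ⁻¹' D))
        rw [← lintegral_indicator_const (measurable_prodMk_left hS)]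
        rfl

end OrthonormalBasis

theorem stmt_4_general
    (D : Set (EuclideanSpace ℝ (Fin 3))) (hDmeas : MeasurableSet D)
    (hDbdd : Bornology.IsBounded D)
    (ω : EuclideanSpace ℝ (Fin 3)) (hω : ‖ω‖ = 1)
    (p : ℝ) (hp : 1 ≤ p)
    (hval : ℝ)
    (hreg : ∃ C > (0:ℝ), ∃ δ > (0:ℝ),
      ∀ᵐ s ∂(volume.restrict (Set.Ioo (0:ℝ) δ)),
        ENNReal.ofReal (C * s ^ (p - 1)) ≤
          μH[2] (D ∩ {x | ⟪x, ω⟫ = hval - s})) :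
    ∃ C > (0:ℝ), ∃ τ₀ > (0:ℝ), ∀ τ : ℝ, τ₀ ≤ τ →
      C * τ ^ (-(p / 2)) ≤
        Real.exp (-(τ * hval)) * Real.sqrt (∫ x in D, Real.exp (2 * τ * ⟪x, ω⟫)) := by
  obtain ⟨C, hC, δ, hδ, hreg⟩ := hreg
  obtain ⟨b, rfl⟩ := exists_orthonormalBasis_apply_zero_eq finrank_euclideanSpace_fin hω
  have hslice : ∀ᵐ s ∂volume.restrict (Set.Ioo 0 δ), ENNReal.ofReal (C / 3 * s ^ (p - 1)) ≤
      volume {y | b.measurableEquivProd (hval - s, y) ∈ D} := by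
    filter_upwards [hreg] with s hs
    have := b.hausdorffMeasure_inter_setOf_inner_eq_le D (hval - s)
    norm_num at this -- the Lipschitz factor is `√3 ^ 2 = 3`
    rw [div_mul_eq_mul_div, ENNReal.ofReal_div_of_pos three_pos, ENNReal.ofReal_ofNat]
    exact ENNReal.div_le_of_le_mul' (hs.trans this)
  set M := C / 3 * Real.exp (-1) * 4 ^ (-p)
  refine ⟨Real.sqrt M, Real.sqrt_pos.2 (by positivity), δ⁻¹, inv_pos.2 hδ, fun τ hτ => ?_⟩
  have hτ₀ : 0 < τ := (inv_pos.2 hδ).trans_le hτ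
  have hlower := ofReal_le_lintegral_exp_mul (h := hval) (C := C / 3) (t := 2 * τ)
    (ν := fun c => volume {y | b.measurableEquivProd (c, y) ∈ D}) hp (by positivity) hδ hslice
    (by linarith)
  have hint : IntegrableOn (fun x => Real.exp (2 * τ * ⟪x, b 0⟫)) D :=
    ((by fun_prop : Continuous fun x => Real.exp (2 * τ * ⟪x, b 0⟫)).locallyIntegrable
      |>.integrableOn_isCompact hDbdd.isCompact_closure).mono_set subset_closure
  rw [← b.setLIntegral_comp_inner_eq hDmeas (by fun_prop),
    ← ofReal_integral_eq_lintegral_ofReal hint (ae_of_all _ fun _ => Real.exp_nonneg _),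
    ENNReal.ofReal_le_ofReal_iff (setIntegral_nonneg hDmeas fun _ _ => Real.exp_nonneg _)] at hlower
  refine sqrt_mul_rpow_neg_half_le hτ₀ (le_of_eq_of_le ?_ hlower)
  rw [show 2 * (2 * τ) = 4 * τ by ring, Real.mul_rpow (by norm_num) hτ₀.le]
  ring

/-- If D is p-regular with respect to ω then there are C > 0 and τ₀ > 0 such that for all
τ ≥ τ₀, e^{-τ h_D(ω)} ‖v₀‖_{L²(D)} ≥ C τ^{-p/2}. -/
theorem stmt_4
    (D : Set (EuclideanSpace ℝ (Fin 3))) (hDmeas : MeasurableSet D)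
    (hDbdd : Bornology.IsBounded D) (hDpos : 0 < volume D)
    (ω : EuclideanSpace ℝ (Fin 3)) (hω : ‖ω‖ = 1)
    (p : ℝ) (hp : 1 ≤ p)
    (hval : ℝ) (hvaldef : hval = sSup ((fun x => ⟪x, ω⟫) '' D))
    (hreg : ∃ C > (0:ℝ), ∃ δ > (0:ℝ),
      ∀ᵐ s ∂(volume.restrict (Set.Ioo (0:ℝ) δ)),
        ENNReal.ofReal (C * s ^ (p - 1)) ≤
          μH[2] (D ∩ {x | ⟪x, ω⟫ = hval - s})) :
    ∃ C > (0:ℝ), ∃ τ₀ > (0:ℝ), ∀ τ : ℝ, τ₀ ≤ τ →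
      C * τ ^ (-(p / 2)) ≤
        Real.exp (-(τ * hval)) * Real.sqrt (∫ x in D, Real.exp (2 * τ * ⟪x, ω⟫)) :=
  stmt_4_general D hDmeas hDbdd ω hω p hp hval hreg
end

section
/- Let D = { x ∈ ℝ² : x₁ < x₂ < 2x₁ and 0 < x₁ } ∩ B, where B is the open unit disk centered at the origin, and let ω = −e₂ = (0,−1). Then: (i) h_D(ω) = sup_{x∈D} x·ω = 0 and the closure of D meets the line {x : x·ω = 0} only at the origin; and (ii) for every δ ∈ (0, 1/√2), every C ≥ 0, and every function l : ℝ → ℝ with 0 ≤ l(t) ≤ C|t| for all t, the set D does not equal { y ∈ ℝ² : |y₁| < δ and l(y₁) < y₂ < δ }. -/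
open scoped RealInnerProductSpace

/-! The sector lies in the closed cone `0 ≤ x₀ ≤ x₁`, which meets the line `x₁ = 0` only at the
origin, while the segment `t ↦ t • (3/5, 4/5)` lies in the sector and tends to the origin; this
gives (i). For (ii), any region `{|y₀| < δ, l y₀ < y₁ < δ}` with `l 0 = 0` contains points of the
axis `y₀ = 0`, which the sector avoids. -/

open Set Filter Topology

def sector : Set (EuclideanSpace ℝ (Fin 2)) :=
  {x | x 0 < x 1 ∧ x 1 < 2 * x 0 ∧ 0 < x 0} ∩ Metric.ball 0 1

lemma inner_eq_neg_snd {ω : EuclideanSpace ℝ (Fin 2)} (hω : ω 0 = 0 ∧ ω 1 = -1)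
    (x : EuclideanSpace ℝ (Fin 2)) : ⟪x, ω⟫ = -x 1 := by
  simp [PiLp.inner_apply, Fin.sum_univ_two, hω.1, hω.2]

lemma closure_sector_subset_cone : closure sector ⊆ {x | 0 ≤ x 0 ∧ x 0 ≤ x 1} := by
  have hclosed : IsClosed {x : EuclideanSpace ℝ (Fin 2) | 0 ≤ x 0 ∧ x 0 ≤ x 1} :=
    (isClosed_le continuous_const (PiLp.continuous_apply 2 _ 0)).inter
      (isClosed_le (PiLp.continuous_apply 2 _ 0) (PiLp.continuous_apply 2 _ 1))
  refine hclosed.closure_subset_iff.mpr ?_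
  rintro x ⟨⟨h01, -, h0⟩, -⟩
  exact ⟨h0.le, h01.le⟩

lemma smul_mem_sector {t : ℝ} (ht : t ∈ Ioo 0 1) : t • !₂[3/5, 4/5] ∈ sector := by
  obtain ⟨ht0, ht1⟩ := ht
  have hnorm : ‖!₂[(3/5 : ℝ), 4/5]‖ = 1 := by
    rw [EuclideanSpace.norm_eq, Fin.sum_univ_two]
    norm_num
  refine ⟨?_, ?_⟩
  · simp only [mem_ofPred_eq, PiLp.smul_apply, smul_eq_mul, Matrix.cons_val_zero,
      Matrix.cons_val_one]
    exact ⟨by linarith, by linarith, by positivity⟩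
  · rw [mem_ball_zero_iff, norm_smul, hnorm, Real.norm_of_nonneg ht0.le]
    linarith

lemma zero_mem_closure_sector : (0 : EuclideanSpace ℝ (Fin 2)) ∈ closure sector := by
  have hlim : Tendsto (fun t : ℝ => t • !₂[(3/5 : ℝ), 4/5]) (𝓝[>] 0) (𝓝 0) := by
    have hcont : Continuous fun t : ℝ => t • !₂[(3/5 : ℝ), 4/5] :=
      continuous_id.smul continuous_const
    simpa using (hcont.tendsto 0).mono_left nhdsWithin_le_nhds
  exact mem_closure_of_tendsto hlim
    (mem_of_superset (Ioo_mem_nhdsGT one_pos) fun t ht => smul_mem_sector ht)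

lemma isLUB_neg_snd_image_sector :
    IsLUB ((fun x : EuclideanSpace ℝ (Fin 2) => -x 1) '' sector) 0 := by
  refine isLUB_of_mem_closure ?_ ?_
  · rintro _ ⟨x, ⟨⟨h01, -, h0⟩, -⟩, rfl⟩
    linarith
  · simpa using mem_closure_image (PiLp.continuous_apply 2 _ 1).neg.continuousAt
      zero_mem_closure_sector

lemma closure_sector_inter_snd_eq_zero :
    closure sector ∩ {x : EuclideanSpace ℝ (Fin 2) | x 1 = 0} = {0} := by
  refine subset_antisymm ?_ ?_
  · rintro x ⟨hx, hx1⟩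
    obtain ⟨h0, h01⟩ := closure_sector_subset_cone hx
    have hx0 : x 0 = 0 := le_antisymm (hx1 ▸ h01) h0
    ext i
    fin_cases i <;> simp [hx0, hx1.symm]
  · rintro _ rfl
    exact ⟨zero_mem_closure_sector, by simp⟩

lemma sector_ne_subgraph {δ : ℝ} {l : ℝ → ℝ} (hδ : 0 < δ) (hl : l 0 < δ) :
    sector ≠ {y : EuclideanSpace ℝ (Fin 2) | |y 0| < δ ∧ l (y 0) < y 1 ∧ y 1 < δ} := by
  intro h
  have hy : !₂[0, (l 0 + δ) / 2] ∈
      {y : EuclideanSpace ℝ (Fin 2) | |y 0| < δ ∧ l (y 0) < y 1 ∧ y 1 < δ} := by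
    simp only [mem_ofPred_eq, Matrix.cons_val_zero, Matrix.cons_val_one, abs_zero]
    exact ⟨hδ, by linarith, by linarith⟩
  rw [← h] at hy
  exact lt_irrefl _ hy.1.2.2

/-- The planar sector counterexample of Section 4: for
D = {x : x₁ < x₂ < 2x₁, 0 < x₁} ∩ B(0,1) and ω = -e₂ = (0,-1),
(i) h_D(ω) = 0 and the closure of D meets the line {x·ω = 0} only at the origin, and
(ii) for every δ ∈ (0, 1/√2), every C ≥ 0 and every l : ℝ → ℝ with 0 ≤ l(t) ≤ C|t|,
D is not the Lipschitz subgraph region {y : |y₁| < δ, l(y₁) < y₂ < δ}. -/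
theorem stmt_15
    (D : Set (EuclideanSpace ℝ (Fin 2)))
    (hD : D = {x : EuclideanSpace ℝ (Fin 2) | x 0 < x 1 ∧ x 1 < 2 * x 0 ∧ 0 < x 0} ∩
      Metric.ball 0 1)
    (ω : EuclideanSpace ℝ (Fin 2)) (hω : ω 0 = 0 ∧ ω 1 = -1) :
    sSup ((fun x => ⟪x, ω⟫) '' D) = 0 ∧
    closure D ∩ {x | ⟪x, ω⟫ = 0} = {(0 : EuclideanSpace ℝ (Fin 2))} ∧
    (∀ δ : ℝ, 0 < δ → δ < 1 / Real.sqrt 2 →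
      ∀ C : ℝ, 0 ≤ C → ∀ l : ℝ → ℝ, (∀ t, 0 ≤ l t ∧ l t ≤ C * |t|) →
        D ≠ {y : EuclideanSpace ℝ (Fin 2) | |y 0| < δ ∧ l (y 0) < y 1 ∧ y 1 < δ}) := by
  obtain rfl : D = sector := hD
  simp only [inner_eq_neg_snd hω, neg_eq_zero]
  refine ⟨isLUB_neg_snd_image_sector.csSup_eq ?_, closure_sector_inter_snd_eq_zero, ?_⟩
  · exact ⟨_, mem_image_of_mem _ (smul_mem_sector ⟨one_half_pos, one_half_lt_one⟩)⟩
  · intro δ hδ _ C _ l hl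
    have hl0 : l 0 = 0 := le_antisymm (by simpa using (hl 0).2) (hl 0).1
    exact sector_ne_subgraph hδ (by rw [hl0]; exact hδ)
end

section
/- Let B ⊆ ℝ³ be an open ball and let a be a point on its boundary sphere. Then ∫_B ‖x − y‖^{−4} dx tends to +∞ as y → a (y ∈ ℝ³). Consequently, if D ⊆ ℝ³ is a bounded open set containing B with a ∈ ∂D, then, since for k > 0 the gradient of G_y(x) = e^{ik‖x−y‖}/(4π‖x−y‖) satisfies ‖∇_x G_y(x)‖² = (1 + k²‖x−y‖²)/(16π²‖x−y‖⁴) ≥ 1/(16π²‖x−y‖⁴), one has ∫_D ‖∇_x G_y(x)‖² dx → +∞ as y → a. -/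
open MeasureTheory Filter Metric AffineMap Topology Module
open scoped ENNReal

/-!
For `a` on the sphere `S(z, r)` and `0 < s ≤ r`, the ball of radius `s / 2` around the point of
the segment `[a, z]` at distance `s` from `a` lies in `B(z, r)`, and on it `‖x - a‖ < 2 s`.
Hence `∫_{B(z, r)} ‖x - a‖⁻ⁿ ≥ c s^{d - n}` with `d = dim E`, which is unbounded as `s → 0` once
`n > d`; so the integral at `y = a` is infinite, and Fatou's lemma upgrades this to divergence as
`y → a`. The gradient integrand dominates `‖x - y‖⁻⁴ / (16π²)`, and `D ⊇ B(z, r)`.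
-/

theorem tendsto_div_pow_nhdsGT_zero_atTop {d n : ℕ} (hdn : d < n) :
    Tendsto (fun s : ℝ => (s / 2) ^ d / (2 * s) ^ n) (𝓝[>] 0) atTop := by
  obtain ⟨m, rfl⟩ := Nat.exists_eq_add_of_lt hdn
  have hpow : Tendsto (fun s : ℝ => (2 ^ (2 * d + m + 1) : ℝ)⁻¹ * s⁻¹ ^ (m + 1)) (𝓝[>] 0) atTop :=
    ((tendsto_pow_atTop m.succ_ne_zero).comp tendsto_inv_nhdsGT_zero).const_mul_atTop
      (by positivity)
  refine hpow.congr' (eventually_nhdsWithin_of_forall fun s (hs : 0 < s) => ?_)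
  simp only [inv_pow, div_pow, mul_pow]
  field_simp
  ring

theorem tendsto_lintegral_nhds_top_of_ae_tendsto {ι α : Type*} [MeasurableSpace α]
    {μ : Measure α} {l : Filter ι} [l.IsCountablyGenerated] {F : ι → α → ℝ≥0∞}
    {G : α → ℝ≥0∞} (hF : ∀ i, AEMeasurable (F i) μ)
    (hlim : ∀ᵐ x ∂μ, Tendsto (fun i => F i x) l (𝓝 (G x))) (htop : ∫⁻ x, G x ∂μ = ⊤) :
    Tendsto (fun i => ∫⁻ x, F i x ∂μ) l (𝓝 ⊤) := by
  rcases eq_or_neBot l with rfl | hl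
  · exact tendsto_bot
  have hliminf : ⊤ ≤ liminf (fun i => ∫⁻ x, F i x ∂μ) l :=
    calc ⊤ = ∫⁻ x, liminf (fun i => F i x) l ∂μ := by
          rw [← htop]
          exact lintegral_congr_ae (hlim.mono fun x hx => hx.liminf_eq.symm)
      _ ≤ _ := lintegral_liminf_le' hF
  refine ENNReal.tendsto_nhds_top fun n => ?_
  exact eventually_lt_of_lt_liminf ((ENNReal.natCast_lt_top n).trans_le hliminf)

section
variable {E : Type*} [NormedAddCommGroup E] [NormedSpace ℝ E] {z a : E} {r s : ℝ}

theorem ball_lineMap_subset_ball (ha : a ∈ sphere z r) (hs : 0 < s) (hsr : s ≤ r) :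
    ball (lineMap a z (s / r)) (s / 2) ⊆ ball z r := by
  have hr : 0 < r := hs.trans_le hsr
  have hsr' : s / r ≤ 1 := (div_le_one hr).mpr hsr
  refine ball_subset_ball' ?_
  rw [dist_lineMap_right, mem_sphere.mp ha, Real.norm_of_nonneg (by linarith)]
  field_simp
  linarith

theorem dist_lineMap_div_left (ha : a ∈ sphere z r) (hr : 0 < r) (hs : 0 ≤ s) :
    dist (lineMap a z (s / r)) a = s := by
  rw [dist_lineMap_left, mem_sphere.mp ha, Real.norm_of_nonneg (by positivity)]
  field_simp

variable [FiniteDimensional ℝ E] [MeasurableSpace E] [BorelSpace E]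
  (μ : Measure E) [μ.IsAddHaarMeasure]

theorem div_pow_mul_measure_ball_le_setLIntegral (ha : a ∈ sphere z r) (hs : 0 < s)
    (hsr : s ≤ r) (n : ℕ) :
    ENNReal.ofReal ((s / 2) ^ finrank ℝ E / (2 * s) ^ n) * μ (ball 0 1) ≤
      ∫⁻ x in ball z r, ENNReal.ofReal (1 / ‖x - a‖ ^ n) ∂μ := by
  set c := lineMap a z (s / r)
  have hca : dist c a = s := dist_lineMap_div_left ha (hs.trans_le hsr) hs.le
  have hbound : ∀ x ∈ ball c (s / 2), ENNReal.ofReal (1 / (2 * s) ^ n) ≤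
      ENNReal.ofReal (1 / ‖x - a‖ ^ n) := fun x hx => by
    have hxc : dist x c < s / 2 := hx
    have hxa : dist x a ≤ dist x c + dist c a := dist_triangle x c a
    have hxa' : dist c a ≤ dist x c + dist x a := dist_triangle_left c a x
    have hpos : 0 < dist x a := by linarith
    rw [← dist_eq_norm]
    exact ENNReal.ofReal_le_ofReal <| one_div_le_one_div_of_le (pow_pos hpos n) <|
      pow_le_pow_left₀ hpos.le (by linarith) n
  calc ENNReal.ofReal ((s / 2) ^ finrank ℝ E / (2 * s) ^ n) * μ (ball 0 1)
      = ENNReal.ofReal (1 / (2 * s) ^ n) * μ (ball c (s / 2)) := by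
        rw [Measure.addHaar_ball_of_pos μ c (by positivity), ← mul_assoc, ← ENNReal.ofReal_mul
          (by positivity), one_div_mul_eq_div]
    _ = ∫⁻ _ in ball c (s / 2), ENNReal.ofReal (1 / (2 * s) ^ n) ∂μ :=
        (setLIntegral_const _ _).symm
    _ ≤ ∫⁻ x in ball c (s / 2), ENNReal.ofReal (1 / ‖x - a‖ ^ n) ∂μ :=
        setLIntegral_mono (by fun_prop) hbound
    _ ≤ ∫⁻ x in ball z r, ENNReal.ofReal (1 / ‖x - a‖ ^ n) ∂μ :=
        lintegral_mono_set (ball_lineMap_subset_ball ha hs hsr)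

theorem setLIntegral_ball_one_div_pow_eq_top (ha : a ∈ sphere z r) (hr : 0 < r) {n : ℕ}
    (hn : finrank ℝ E < n) : ∫⁻ x in ball z r, ENNReal.ofReal (1 / ‖x - a‖ ^ n) ∂μ = ⊤ := by
  have hlower : Tendsto (fun s => ENNReal.ofReal ((s / 2) ^ finrank ℝ E / (2 * s) ^ n) *
      μ (ball 0 1)) (𝓝[>] 0) (𝓝 ⊤) := by
    have := ENNReal.Tendsto.mul_const
      (ENNReal.tendsto_ofReal_atTop.comp (tendsto_div_pow_nhdsGT_zero_atTop hn))
      (b := μ (ball 0 1)) (Or.inr measure_ball_lt_top.ne)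
    rwa [ENNReal.top_mul (measure_ball_pos μ 0 one_pos).ne'] at this
  refine top_le_iff.mp (le_of_tendsto hlower ?_)
  filter_upwards [Ioc_mem_nhdsGT hr] with s hs
  exact div_pow_mul_measure_ball_le_setLIntegral μ ha hs.1 hs.2 n

theorem tendsto_setLIntegral_ball_one_div_pow_nhds_top (ha : a ∈ sphere z r) (hr : 0 < r)
    {n : ℕ} (hn : finrank ℝ E < n) :
    Tendsto (fun y => ∫⁻ x in ball z r, ENNReal.ofReal (1 / ‖x - y‖ ^ n) ∂μ) (𝓝 a) (𝓝 ⊤) := by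
  have : Nontrivial E := ⟨a, z, ne_of_mem_sphere ha hr.ne'⟩
  refine tendsto_lintegral_nhds_top_of_ae_tendsto (fun y => by fun_prop)
    (ae_restrict_of_ae ((μ.ae_ne a).mono fun x hx => ?_))
    (setLIntegral_ball_one_div_pow_eq_top μ ha hr hn)
  refine ENNReal.continuous_ofReal.continuousAt.comp ?_
  fun_prop (disch := simp [sub_ne_zero.mpr hx])
end

theorem inv_pow_four_le_gradient_sq (k t : ℝ) :
    ENNReal.ofReal (1 / (16 * Real.pi ^ 2)) * ENNReal.ofReal (1 / t ^ 4) ≤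
      ENNReal.ofReal ((1 + k ^ 2 * t ^ 2) / (16 * Real.pi ^ 2 * t ^ 4)) := by
  rw [← ENNReal.ofReal_mul (by positivity), one_div_mul_one_div]
  gcongr
  nlinarith [sq_nonneg (k * t)]

theorem stmt_17_general
    (z : EuclideanSpace ℝ (Fin 3)) (r : ℝ) (hr : 0 < r)
    (a : EuclideanSpace ℝ (Fin 3)) (ha : a ∈ Metric.sphere z r)
    (k : ℝ)
    (D : Set (EuclideanSpace ℝ (Fin 3))) (hBD : Metric.ball z r ⊆ D) :
    Tendsto (fun y : EuclideanSpace ℝ (Fin 3) =>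
        ∫⁻ x in Metric.ball z r, ENNReal.ofReal (1 / ‖x - y‖ ^ 4)) (nhds a) (nhds ⊤) ∧
    Tendsto (fun y : EuclideanSpace ℝ (Fin 3) =>
        ∫⁻ x in D, ENNReal.ofReal
          ((1 + k ^ 2 * ‖x - y‖ ^ 2) / (16 * Real.pi ^ 2 * ‖x - y‖ ^ 4)))
      (nhds a) (nhds ⊤) := by
  have hball := tendsto_setLIntegral_ball_one_div_pow_nhds_top volume ha hr (n := 4) (by simp)
  set c := ENNReal.ofReal (1 / (16 * Real.pi ^ 2))
  have hc : c ≠ 0 := (ENNReal.ofReal_pos.mpr (by positivity)).ne'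
  have hscaled := ENNReal.Tendsto.const_mul (a := c) hball (Or.inl ENNReal.top_ne_zero)
  rw [ENNReal.mul_top hc] at hscaled
  refine ⟨hball, tendsto_nhds_top_mono hscaled (Eventually.of_forall fun y => ?_)⟩
  calc c * ∫⁻ x in ball z r, ENNReal.ofReal (1 / ‖x - y‖ ^ 4)
      ≤ ∫⁻ x in ball z r, c * ENNReal.ofReal (1 / ‖x - y‖ ^ 4) := lintegral_const_mul_le _ _
    _ ≤ ∫⁻ x in ball z r, ENNReal.ofReal
          ((1 + k ^ 2 * ‖x - y‖ ^ 2) / (16 * Real.pi ^ 2 * ‖x - y‖ ^ 4)) :=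
        lintegral_mono fun x => inv_pow_four_le_gradient_sq k _
    _ ≤ _ := lintegral_mono_set hBD

/-- Blow-up at a boundary point with an interior ball: if B = B(z,r) ⊆ ℝ³ and a lies on the
boundary sphere of B, then ∫_B ‖x-y‖^{-4} dx → ∞ as y → a; consequently, for a bounded open
D ⊇ B with a ∈ ∂D, the squared-gradient integral
∫_D (1 + k²‖x-y‖²)/(16π²‖x-y‖⁴) dx = ∫_D ‖∇G_y‖² dx also tends to ∞ as y → a. -/
theorem stmt_17
    (z : EuclideanSpace ℝ (Fin 3)) (r : ℝ) (hr : 0 < r)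
    (a : EuclideanSpace ℝ (Fin 3)) (ha : a ∈ Metric.sphere z r)
    (k : ℝ) (hk : 0 < k)
    (D : Set (EuclideanSpace ℝ (Fin 3))) (hDopen : IsOpen D)
    (hDbdd : Bornology.IsBounded D) (hBD : Metric.ball z r ⊆ D) (haD : a ∈ frontier D) :
    Tendsto (fun y : EuclideanSpace ℝ (Fin 3) =>
        ∫⁻ x in Metric.ball z r, ENNReal.ofReal (1 / ‖x - y‖ ^ 4)) (nhds a) (nhds ⊤) ∧
    Tendsto (fun y : EuclideanSpace ℝ (Fin 3) =>
        ∫⁻ x in D, ENNReal.ofReal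
          ((1 + k ^ 2 * ‖x - y‖ ^ 2) / (16 * Real.pi ^ 2 * ‖x - y‖ ^ 4)))
      (nhds a) (nhds ⊤) :=
  stmt_17_general z r hr a ha k D hBD
end
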